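/- Given a hypergraph H with a disjoint branches decomposition, the incidence graph of H has MIM-width at most 2. -/

import Mathlib

/-!
Root the join tree at `r` and order its nodes by ancestry. Disjoint branches make the nodes whose
bags contain a vertex `v` a chain, and running intersection makes this chain convex, so `v` has a
deepest such node; each hyperedge `e` is placed at a node whose bag is `e`. Build the branch
decomposition bottom-up, gluing at each node `t` the elements placed at `t` and the decompositions
of the child subtrees into a caterpillar. Every cut `X` then lives at some node `t`: it lies in
the subtree of `t` and contains all or nothing of each subtree strictly below `t`.

In an induced matching across such a cut, a pair with the hyperedge `e` in `X` and its vertex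
outside forces `e` to be placed at `t`, so there is at most one such pair. A pair with the vertex
`v` in `X` and `e` outside forces `e` to be placed on the path from the root to `t` and `v` into
the bag of `t`; of two such pairs, if `e₁` is placed above `e₂`, convexity puts `v₁` into `e₂`,
so the matching is not induced.
-/

open Finset
open scoped Classical

/-- Rooted binary trees with leaves labelled by `α`; used as (rooted) branch
decompositions. -/
inductive BT (α : Type*) : Type _
  | leaf : α → BT α
  | node : BT α → BT α → BT α

namespace BT

variable {α : Type*}

/-- The list of leaf labels of a tree. -/
def leafList : BT α → List α
  | leaf a => [a]
  | node l r => leafList l ++ leafList r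

/-- `t` is a branch decomposition of (all of) `α`: every element of `α`
labels exactly one leaf. -/
def IsDecompOf [Fintype α] (t : BT α) : Prop :=
  t.leafList.Nodup ∧ ∀ a : α, a ∈ t.leafList

/-- The cuts of a branch decomposition: the leaf sets of all its subtrees. -/
noncomputable def cuts [DecidableEq α] : BT α → Finset (Finset α)
  | leaf a => {{a}}
  | node l r => cuts l ∪ cuts r ∪ {(l.leafList ++ r.leafList).toFinset}

end BT

/-- The cut graph `G[X, X̄]` has an induced matching of size `m`: `m` edges of
`G` crossing the cut `(X, X̄)`, pairwise disjoint and with no `G`-edge crossing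
the cut between endpoints of two different matching edges. -/
def CrossIndMatching {α : Type*} (G : SimpleGraph α) (X : Finset α) (m : ℕ) : Prop :=
  ∃ f : Fin m → α × α,
    (∀ i, (f i).1 ∈ X ∧ (f i).2 ∉ X ∧ G.Adj (f i).1 (f i).2) ∧
    (∀ i j, i ≠ j →
      (f i).1 ≠ (f j).1 ∧ (f i).2 ≠ (f j).2 ∧ ¬ G.Adj (f i).1 (f j).2)

/-- The size of a maximum induced matching of the cut graph `G[X, X̄]`. -/
noncomputable def cutMim {α : Type*} (G : SimpleGraph α) (X : Finset α) : ℕ :=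
  sSup {m | CrossIndMatching G X m}

/-- The MIM-width of a graph: the minimum over branch decompositions of the
maximum, over all cuts, of the maximum induced matching size of the cut graph. -/
noncomputable def mimw {α : Type*} [Fintype α] [DecidableEq α] (G : SimpleGraph α) : ℕ :=
  sInf {k | ∃ t : BT α, t.IsDecompOf ∧ ∀ X ∈ t.cuts, cutMim G X ≤ k}

variable {V : Type*} [Fintype V] [DecidableEq V]

/-- The incidence graph of a hypergraph: vertices `V ⊕ E`, with `v` adjacent
to `e` iff `v ∈ e`. -/
def incG (E : Finset (Finset V)) : SimpleGraph (V ⊕ {e // e ∈ E}) :=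
  SimpleGraph.fromRel (fun a b =>
    match a, b with
    | Sum.inl v, Sum.inr e => v ∈ e.1
    | _, _ => False)

namespace SimpleGraph

variable {ι : Type*} {T : SimpleGraph ι} {r a b c : ι}

def IsAncestor (T : SimpleGraph ι) (r a b : ι) : Prop :=
  ∃ p : T.Walk r b, p.IsPath ∧ a ∈ p.support

lemma Connected.isAncestor_refl (hT : T.Connected) (r a : ι) : T.IsAncestor r a a :=
  let ⟨p, hp⟩ := hT.exists_isPath r a
  ⟨p, hp, p.end_mem_support⟩

lemma Connected.isAncestor_root (hT : T.Connected) (r a : ι) : T.IsAncestor r r a :=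
  let ⟨p, hp⟩ := hT.exists_isPath r a
  ⟨p, hp, p.start_mem_support⟩

namespace IsAcyclic

lemma eq_of_isPath (hT : T.IsAcyclic) {u v : ι} {p q : T.Walk u v} (hp : p.IsPath)
    (hq : q.IsPath) : p = q :=
  congrArg Subtype.val ((hT.subsingleton_path u v).elim ⟨p, hp⟩ ⟨q, hq⟩)

lemma isAncestor_iff (hT : T.IsAcyclic) {p : T.Walk r b} (hp : p.IsPath) :
    T.IsAncestor r a b ↔ a ∈ p.support :=
  ⟨fun ⟨_, hq, ha⟩ => hT.eq_of_isPath hq hp ▸ ha, fun ha => ⟨p, hp, ha⟩⟩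

lemma isAncestor_trans (hT : T.IsAcyclic) (hab : T.IsAncestor r a b) (hbc : T.IsAncestor r b c) :
    T.IsAncestor r a c := by
  obtain ⟨q, hq, hb⟩ := hbc
  have ha := (hT.isAncestor_iff (hq.takeUntil hb)).1 hab
  exact ⟨q, hq, q.support_takeUntil_subset_support hb ha⟩

lemma isAncestor_antisymm (hT : T.IsAcyclic) (hab : T.IsAncestor r a b)
    (hba : T.IsAncestor r b a) : a = b := by
  obtain ⟨p, hp, ha⟩ := hab
  obtain ⟨q, hq, hb⟩ := hba
  have hpq : q.support <+: p.support :=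
    hT.eq_of_isPath (hp.takeUntil ha) hq ▸ p.support_takeUntil_prefix_support ha
  have hqp : p.support <+: q.support :=
    hT.eq_of_isPath (hq.takeUntil hb) hp ▸ q.support_takeUntil_prefix_support hb
  have hsupp : q.support = p.support := hpq.eq_of_length (hpq.length_le.antisymm hqp.length_le)
  rw [← q.getLast_support, ← p.getLast_support]
  simp only [hsupp]

lemma isAncestor_total (hT : T.IsAcyclic) (hac : T.IsAncestor r a c) (hbc : T.IsAncestor r b c) :
    T.IsAncestor r a b ∨ T.IsAncestor r b a := by
  obtain ⟨p, hp, ha⟩ := hac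
  have hb := (hT.isAncestor_iff hp).1 hbc
  refine (List.prefix_or_prefix_of_prefix (p.support_takeUntil_prefix_support ha)
    (p.support_takeUntil_prefix_support hb)).imp (fun h => ?_) (fun h => ?_)
  · exact ⟨_, hp.takeUntil hb, h.subset (p.takeUntil a ha).end_mem_support⟩
  · exact ⟨_, hp.takeUntil ha, h.subset (p.takeUntil b hb).end_mem_support⟩

lemma exists_isPath_of_isAncestor (hT : T.IsAcyclic) {s : ι} (has : T.IsAncestor r a s)
    (hsb : T.IsAncestor r s b) :
    ∃ p : T.Walk a b, p.IsPath ∧ s ∈ p.support := by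
  obtain ⟨q, hq, hs⟩ := hsb
  have ha : a ∈ q.support :=
    q.support_takeUntil_subset_support hs ((hT.isAncestor_iff (hq.takeUntil hs)).1 has)
  refine ⟨q.dropUntil a ha, hq.dropUntil ha, ?_⟩
  rw [← q.take_spec ha, Walk.mem_support_append_iff] at hs
  rcases hs with hs | hs
  · have hsa : T.IsAncestor r s a := ⟨_, hq.takeUntil ha, hs⟩
    rw [hT.isAncestor_antisymm hsa has]
    exact (q.dropUntil a ha).start_mem_support
  · exact hs

end IsAcyclic

abbrev IsTree.ancestorOrder (hT : T.IsTree) (r : ι) : PartialOrder ι where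
  le := T.IsAncestor r
  le_refl := hT.connected.isAncestor_refl r
  le_trans _ _ _ := hT.isAcyclic.isAncestor_trans
  le_antisymm _ _ := hT.isAcyclic.isAncestor_antisymm

end SimpleGraph

section TreeOrder

variable {P : Type*} [PartialOrder P]

lemma IsChain.exists_isGreatest {s : Set P} (hs : IsChain (· ≤ ·) s) (hfin : s.Finite)
    (hne : s.Nonempty) : ∃ m, IsGreatest s m := by
  obtain ⟨m, hm⟩ := hfin.exists_maximal hne
  exact ⟨m, hm.1, fun x hx => (hs.total hx hm.1).elim id (hm.2 hx)⟩

lemma le_of_covBy_of_lt (hchain : ∀ p : P, IsChain (· ≤ ·) (Set.Iic p)) {t u s p : P}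
    (hu : t ⋖ u) (hs : t < s) (hup : u ≤ p) (hsp : s ≤ p) :
    u ≤ s := by
  rcases (hchain p).total hup hsp with h | h
  · exact h
  · obtain h | h := h.lt_or_eq
    · exact (hu.2 hs h).elim
    · exact h.ge

lemma eq_of_covBy_of_le (hchain : ∀ p : P, IsChain (· ≤ ·) (Set.Iic p)) {t u u' s : P}
    (hu : t ⋖ u) (hu' : t ⋖ u') (hs : u ≤ s) (hs' : u' ≤ s) :
    u = u' :=
  (le_of_covBy_of_lt hchain hu hu'.lt hs hs').antisymm
    (le_of_covBy_of_lt hchain hu' hu.lt hs' hs)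

def IsCutAt {α : Type*} (pos : α → P) (t : P) (Y : Finset α) : Prop :=
  (∀ x ∈ Y, t ≤ pos x) ∧ ∀ s, t < s → ∀ x ∈ Y, ∀ y, s ≤ pos x → s ≤ pos y → y ∈ Y

lemma IsCutAt.not_lt {α : Type*} {pos : α → P} {t s : P} {Y : Finset α} {x y : α}
    (hY : IsCutAt pos t Y) (hx : x ∈ Y) (hy : y ∉ Y) (hsx : s ≤ pos x) (hsy : s ≤ pos y) :
    ¬ t < s :=
  fun hts => hy (hY.2 s hts x hx y hsx hsy)

lemma isCutAt_singleton {α : Type*} (pos : α → P) (a : α) : IsCutAt pos (pos a) {a} := by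
  refine ⟨by simp, fun s hs x hx y hsx _ => ?_⟩
  rw [Finset.mem_singleton] at hx
  exact ((hx ▸ hsx).not_gt hs).elim

end TreeOrder

namespace BT

variable {α : Type*} [DecidableEq α]

lemma exists_glue (B : Finset (BT α)) (hB : B.Nonempty) (hnodup : ∀ c ∈ B, c.leafList.Nodup)
    (hdisj : (B : Set (BT α)).PairwiseDisjoint fun c => c.leafList.toFinset) :
    ∃ b : BT α, b.leafList.Nodup ∧ (∀ x, x ∈ b.leafList ↔ ∃ c ∈ B, x ∈ c.leafList) ∧
      ∀ Y ∈ b.cuts, (∃ c ∈ B, Y ∈ c.cuts) ∨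
        ∃ C ⊆ B, Y = C.biUnion fun c => c.leafList.toFinset := by
  induction hB using Finset.Nonempty.cons_induction with
  | singleton c => exact ⟨c, hnodup c (by simp), by simp, fun Y hY => .inl ⟨c, by simp, hY⟩⟩
  | cons c B hc _ ih =>
    simp only [Finset.cons_eq_insert, Finset.coe_insert, Finset.mem_insert,
      forall_eq_or_imp] at hnodup hdisj ⊢
    obtain ⟨b, hb, hleaves, hcuts⟩ := ih hnodup.2 (hdisj.subset (Set.subset_insert _ _))
    have hcb : ∀ x ∈ c.leafList, x ∉ b.leafList := by
      intro x hxc hxb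
      obtain ⟨c', hc', hxc'⟩ := (hleaves x).1 hxb
      have hcc' : c ≠ c' := (ne_of_mem_of_not_mem hc' hc).symm
      exact Finset.disjoint_left.1 (hdisj (Set.mem_insert _ _) (Set.mem_insert_of_mem _ hc') hcc')
        (List.mem_toFinset.2 hxc) (List.mem_toFinset.2 hxc')
    refine ⟨node c b, ?_, ?_, ?_⟩
    · exact List.nodup_append.2 ⟨hnodup.1, hb, fun x hx y hy hxy => hcb x hx (hxy ▸ hy)⟩
    · intro x
      simp [leafList, hleaves]
    · intro Y hY
      simp only [cuts, Finset.mem_union, Finset.mem_singleton] at hY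
      rcases hY with (hY | hY) | rfl
      · exact .inl ⟨c, .inl rfl, hY⟩
      · rcases hcuts Y hY with ⟨c', hc', hY'⟩ | ⟨C, hC, rfl⟩
        · exact .inl ⟨c', .inr hc', hY'⟩
        · exact .inr ⟨C, hC.trans (Finset.subset_insert _ _), rfl⟩
      · refine .inr ⟨insert c B, subset_rfl, ?_⟩
        ext x
        simp [hleaves]

end BT

section Decomposition

variable {α P : Type*} [Fintype α] [DecidableEq α] [PartialOrder P] {pos : α → P} {t : P}

def IsSubtreeDecomp (pos : α → P) (t : P) (b : BT α) : Prop :=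
  b.leafList.Nodup ∧ (∀ x, x ∈ b.leafList ↔ t ≤ pos x) ∧ ∀ Y ∈ b.cuts, ∃ s, IsCutAt pos s Y

/-- The cuts of the glued tree that are not cuts of a part are unions of parts; these are cuts
at `t` because a part meeting a subtree strictly below `t` contains all of it. -/
lemma exists_isSubtreeDecomp_of_parts (hne : ∃ x, t ≤ pos x) (part : α → BT α)
    (hnodup : ∀ x, t ≤ pos x → (part x).leafList.Nodup)
    (hcuts : ∀ x, t ≤ pos x → ∀ Y ∈ (part x).cuts, ∃ s, IsCutAt pos s Y)
    (hself : ∀ x, t ≤ pos x → x ∈ (part x).leafList)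
    (hmem : ∀ x, t ≤ pos x → ∀ y ∈ (part x).leafList, t ≤ pos y ∧ part y = part x)
    (hsame : ∀ s x y, t < s → s ≤ pos x → s ≤ pos y → part x = part y) :
    ∃ b, IsSubtreeDecomp pos t b := by
  set B := (univ.filter fun x => t ≤ pos x).image part
  have hB {c : BT α} : c ∈ B ↔ ∃ x, t ≤ pos x ∧ part x = c := by simp [B]
  obtain ⟨b, hb, hleaves, hcuts_b⟩ := BT.exists_glue B
    (let ⟨x, hx⟩ := hne; ⟨part x, hB.2 ⟨x, hx, rfl⟩⟩)
    (fun c hc => let ⟨x, hx, hxc⟩ := hB.1 hc; hxc ▸ hnodup x hx)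
    (fun c hc c' hc' hcc' => by
      obtain ⟨x, hx, rfl⟩ := hB.1 hc
      obtain ⟨x', hx', rfl⟩ := hB.1 hc'
      refine Finset.disjoint_left.2 fun y hy hy' => hcc' ?_
      rw [List.mem_toFinset] at hy hy'
      rw [← (hmem x hx y hy).2, (hmem x' hx' y hy').2])
  have hmem_B {y : α} : (∃ c ∈ B, y ∈ c.leafList) ↔ t ≤ pos y := by
    refine ⟨fun ⟨c, hc, hy⟩ => ?_, fun hy => ⟨part y, hB.2 ⟨y, hy, rfl⟩, hself y hy⟩⟩
    obtain ⟨x, hx, rfl⟩ := hB.1 hc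
    exact (hmem x hx y hy).1
  refine ⟨b, hb, fun y => (hleaves y).trans hmem_B, fun Y hY => ?_⟩
  rcases hcuts_b Y hY with ⟨c, hc, hY⟩ | ⟨C, hC, rfl⟩
  · obtain ⟨x, hx, rfl⟩ := hB.1 hc
    exact hcuts x hx Y hY
  refine ⟨t, fun y hy => ?_, fun s hs y hy z hsy hsz => ?_⟩
  · obtain ⟨c, hc, hy⟩ := Finset.mem_biUnion.1 hy
    exact hmem_B.1 ⟨c, hC hc, List.mem_toFinset.1 hy⟩
  · obtain ⟨c, hc, hy⟩ := Finset.mem_biUnion.1 hy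
    obtain ⟨x, hx, rfl⟩ := hB.1 (hC hc)
    rw [List.mem_toFinset] at hy
    have hz : t ≤ pos z := hs.le.trans hsz
    refine Finset.mem_biUnion.2 ⟨part x, hc, List.mem_toFinset.2 ?_⟩
    rw [← (hmem x hx y hy).2, hsame s y z hs hsy hsz]
    exact hself z hz

theorem exists_isSubtreeDecomp [Fintype P] (hchain : ∀ p : P, IsChain (· ≤ ·) (Set.Iic p))
    (pos : α → P) (t : P) (hne : ∃ x, t ≤ pos x) : ∃ b, IsSubtreeDecomp pos t b := by
  induction t using WellFoundedGT.induction with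
  | _ t IH =>
  have : Nonempty P := ⟨t⟩
  have : Nonempty (BT α) := ⟨.leaf hne.choose⟩
  choose! sub hsub using fun u (hu : t < u) => IH u hu
  choose! child hchild using fun x (hx : t < pos x) => exists_covBy_le_of_lt hx
  have hsub_child {x : α} (hx : t < pos x) : IsSubtreeDecomp pos (child x) (sub (child x)) :=
    hsub _ (hchild x hx).1.lt ⟨x, (hchild x hx).2⟩
  let part (x : α) : BT α := if pos x = t then .leaf x else sub (child x)
  have hsame (s : P) (x y : α) (hs : t < s) (hsx : s ≤ pos x) (hsy : s ≤ pos y) :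
      part x = part y := by
    have hx := hs.trans_le hsx
    have hy := hs.trans_le hsy
    simp only [part, hx.ne', hy.ne', if_false]
    congr 1
    exact eq_of_covBy_of_le hchain (hchild x hx).1 (hchild y hy).1
      (le_of_covBy_of_lt hchain (hchild x hx).1 hs (hchild x hx).2 hsx)
      (le_of_covBy_of_lt hchain (hchild y hy).1 hs (hchild y hy).2 hsy)
  refine exists_isSubtreeDecomp_of_parts hne part (fun x hx => ?_) (fun x hx => ?_)
    (fun x hx => ?_) (fun x hx y hy => ?_) hsame
  · by_cases hxt : pos x = t <;> simp only [part, hxt, if_true, if_false]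
    · simp [BT.leafList]
    · exact (hsub_child (hx.lt_of_ne' hxt)).1
  · by_cases hxt : pos x = t <;> simp only [part, hxt, if_true, if_false]
    · simp only [BT.cuts, Finset.mem_singleton, forall_eq]
      exact ⟨pos x, isCutAt_singleton pos x⟩
    · exact (hsub_child (hx.lt_of_ne' hxt)).2.2
  · by_cases hxt : pos x = t <;> simp only [part, hxt, if_true, if_false]
    · simp [BT.leafList]
    · exact ((hsub_child (hx.lt_of_ne' hxt)).2.1 x).2 (hchild x (hx.lt_of_ne' hxt)).2
  · by_cases hxt : pos x = t <;> simp only [part, hxt, if_true, if_false] at hy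
    · simp only [BT.leafList, List.mem_singleton] at hy
      subst hy
      exact ⟨hx, rfl⟩
    · have hx' := hx.lt_of_ne' hxt
      have hy' := ((hsub_child hx').2.1 y).1 hy
      exact ⟨(hchild x hx').1.le.trans hy',
        hsame _ y x (hchild x hx').1.lt hy' (hchild x hx').2⟩

end Decomposition

section Incidence

variable {U P : Type*} [PartialOrder P] {E : Finset (Finset U)} {lam : P → Finset U}
  {posv : U → P} {pose : {e // e ∈ E} → P} {t : P} {X : Finset (U ⊕ {e // e ∈ E})}
  {v v₁ v₂ : U} {e e₁ e₂ : {e // e ∈ E}}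

lemma pose_le_posv (hposv : ∀ v i, v ∈ lam i → IsGreatest {j | v ∈ lam j} (posv v))
    (hpose : ∀ e, lam (pose e) = e) (hv : v ∈ (e : Finset U)) : pose e ≤ posv v := by
  rw [← hpose e] at hv
  exact (hposv v _ hv).2 hv

lemma pose_eq_of_isCutAt (hposv : ∀ v i, v ∈ lam i → IsGreatest {j | v ∈ lam j} (posv v))
    (hpose : ∀ e, lam (pose e) = e) (hX : IsCutAt (Sum.elim posv pose) t X)
    (he : .inr e ∈ X) (hv : .inl v ∉ X) (hve : v ∈ (e : Finset U)) : pose e = t :=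
  ((hX.1 _ he).lt_or_eq.resolve_left
    (hX.not_lt he hv le_rfl (pose_le_posv hposv hpose hve))).symm

lemma pose_le_and_mem_of_isCutAt (hchain : ∀ p : P, IsChain (· ≤ ·) (Set.Iic p))
    (hconvex : ∀ v, Set.OrdConnected {i | v ∈ lam i})
    (hposv : ∀ v i, v ∈ lam i → IsGreatest {j | v ∈ lam j} (posv v))
    (hpose : ∀ e, lam (pose e) = e) (hX : IsCutAt (Sum.elim posv pose) t X)
    (hv : .inl v ∈ X) (he : .inr e ∉ X) (hve : v ∈ (e : Finset U)) :
    pose e ≤ t ∧ v ∈ lam t := by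
  have hev := pose_le_posv hposv hpose hve
  have htv : t ≤ posv v := hX.1 _ hv
  have het : pose e ≤ t := by
    rcases (hchain _).total hev htv with h | h
    · exact h
    · exact (h.lt_or_eq.resolve_left (hX.not_lt hv he hev le_rfl)).ge
  have hve' : v ∈ lam (pose e) := (hpose e).symm ▸ hve
  exact ⟨het, (hconvex v).out hve' (hposv v _ hve').1 ⟨het, htv⟩⟩

lemma mem_or_mem_of_isCutAt (hchain : ∀ p : P, IsChain (· ≤ ·) (Set.Iic p))
    (hconvex : ∀ v, Set.OrdConnected {i | v ∈ lam i})
    (hposv : ∀ v i, v ∈ lam i → IsGreatest {j | v ∈ lam j} (posv v))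
    (hpose : ∀ e, lam (pose e) = e) (hX : IsCutAt (Sum.elim posv pose) t X)
    (hv₁ : .inl v₁ ∈ X) (he₁ : .inr e₁ ∉ X) (hve₁ : v₁ ∈ (e₁ : Finset U))
    (hv₂ : .inl v₂ ∈ X) (he₂ : .inr e₂ ∉ X) (hve₂ : v₂ ∈ (e₂ : Finset U)) :
    v₁ ∈ (e₂ : Finset U) ∨ v₂ ∈ (e₁ : Finset U) := by
  obtain ⟨het₁, hvt₁⟩ := pose_le_and_mem_of_isCutAt hchain hconvex hposv hpose hX hv₁ he₁ hve₁
  obtain ⟨het₂, hvt₂⟩ := pose_le_and_mem_of_isCutAt hchain hconvex hposv hpose hX hv₂ he₂ hve₂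
  simp only [← hpose] at hve₁ hve₂ ⊢
  rcases (hchain t).total het₁ het₂ with h | h
  · exact .inl ((hconvex v₁).out hve₁ hvt₁ ⟨h, het₂⟩)
  · exact .inr ((hconvex v₂).out hve₂ hvt₂ ⟨h, het₁⟩)

lemma incG_adj_inl_inr : (incG E).Adj (.inl v) (.inr e) ↔ v ∈ (e : Finset U) := by
  simp [incG]

lemma incG_adj_iff {x y : U ⊕ {e // e ∈ E}} :
    (incG E).Adj x y ↔ ∃ (v : U) (e : {e // e ∈ E}), v ∈ (e : Finset U) ∧
      (x = .inl v ∧ y = .inr e ∨ x = .inr e ∧ y = .inl v) := by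
  rcases x with v | e <;> rcases y with w | f <;> simp [incG]

lemma isLeft_ne_of_isCutAt (hchain : ∀ p : P, IsChain (· ≤ ·) (Set.Iic p))
    (hconvex : ∀ v, Set.OrdConnected {i | v ∈ lam i})
    (hposv : ∀ v i, v ∈ lam i → IsGreatest {j | v ∈ lam j} (posv v))
    (hpose : ∀ e, lam (pose e) = e) (hX : IsCutAt (Sum.elim posv pose) t X)
    {x₁ y₁ x₂ y₂ : U ⊕ {e // e ∈ E}}
    (h₁ : x₁ ∈ X ∧ y₁ ∉ X ∧ (incG E).Adj x₁ y₁) (h₂ : x₂ ∈ X ∧ y₂ ∉ X ∧ (incG E).Adj x₂ y₂)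
    (hx : x₁ ≠ x₂) (h₁₂ : ¬ (incG E).Adj x₁ y₂) (h₂₁ : ¬ (incG E).Adj x₂ y₁) :
    x₁.isLeft ≠ x₂.isLeft := by
  obtain ⟨hx₁, hy₁, hadj₁⟩ := h₁
  obtain ⟨hx₂, hy₂, hadj₂⟩ := h₂
  obtain ⟨v₁, e₁, hve₁, ⟨rfl, rfl⟩ | ⟨rfl, rfl⟩⟩ := incG_adj_iff.1 hadj₁ <;>
  obtain ⟨v₂, e₂, hve₂, ⟨rfl, rfl⟩ | ⟨rfl, rfl⟩⟩ := incG_adj_iff.1 hadj₂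
  · rw [incG_adj_inl_inr] at h₁₂ h₂₁
    exact ((mem_or_mem_of_isCutAt hchain hconvex hposv hpose hX hx₁ hy₁ hve₁ hx₂ hy₂
      hve₂).elim h₁₂ h₂₁).elim
  · simp
  · simp
  · have h := (pose_eq_of_isCutAt hposv hpose hX hx₁ hy₁ hve₁).trans
      (pose_eq_of_isCutAt hposv hpose hX hx₂ hy₂ hve₂).symm
    exact (hx (congrArg _ (Subtype.ext ((hpose e₁).symm.trans (h ▸ hpose e₂))))).elim

theorem cutMim_incG_le_two (hchain : ∀ p : P, IsChain (· ≤ ·) (Set.Iic p))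
    (hconvex : ∀ v, Set.OrdConnected {i | v ∈ lam i})
    (hposv : ∀ v i, v ∈ lam i → IsGreatest {j | v ∈ lam j} (posv v))
    (hpose : ∀ e, lam (pose e) = e) (hX : IsCutAt (Sum.elim posv pose) t X) :
    cutMim (incG E) X ≤ 2 := by
  refine csSup_le' fun m ⟨f, hcross, hind⟩ => ?_
  have hinj : Function.Injective fun i => (f i).1.isLeft := fun i j hij => by
    by_contra hne
    exact isLeft_ne_of_isCutAt hchain hconvex hposv hpose hX (hcross i) (hcross j)
      (hind i j hne).1 (hind i j hne).2.2 (hind j i (Ne.symm hne)).2.2 hij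
  simpa using Fintype.card_le_of_injective _ hinj

end Incidence

theorem mimw_le_of_forall_isCutAt {α P : Type*} [Fintype α] [DecidableEq α] [PartialOrder P]
    [Fintype P] (hchain : ∀ p : P, IsChain (· ≤ ·) (Set.Iic p)) {r : P} (hr : IsBot r)
    (pos : α → P) (G : SimpleGraph α) {k : ℕ} (hk : ∀ t Y, IsCutAt pos t Y → cutMim G Y ≤ k) :
    mimw G ≤ k := by
  rcases isEmpty_or_nonempty α with hα | ⟨⟨x⟩⟩
  · have : IsEmpty (BT α) := ⟨fun b => by
      induction b with
      | leaf a => exact hα.false a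
      | node _ _ ih => exact ih⟩
    simp [mimw]
  obtain ⟨b, hb, hleaves, hcuts⟩ := exists_isSubtreeDecomp hchain pos r ⟨x, hr _⟩
  refine Nat.sInf_le ⟨b, ⟨hb, fun a => (hleaves a).2 (hr _)⟩, fun Y hY => ?_⟩
  obtain ⟨t, ht⟩ := hcuts Y hY
  exact hk t Y ht

theorem stmt18_general (E : Finset (Finset V))
    {ι : Type*} [Fintype ι] (T : SimpleGraph ι) (r : ι) (lam : ι → Finset V)
    (htree : T.IsTree)
    (hsurj : ∀ e ∈ E, ∃ i, lam i = e)
    (hconn : ∀ (i j : ι) (p : T.Walk i j), p.IsPath →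
      ∀ v, v ∈ lam i → v ∈ lam j → ∀ t ∈ p.support, v ∈ lam t)
    (hdisj : ∀ i j : ι,
      (¬ ∃ p : T.Walk r j, p.IsPath ∧ i ∈ p.support) →
      (¬ ∃ p : T.Walk r i, p.IsPath ∧ j ∈ p.support) →
      lam i ∩ lam j = ∅) :
    mimw (incG E) ≤ 2 := by
  -- in this order, `hdisj` says that bags at incomparable nodes are disjoint
  let := htree.ancestorOrder r
  have hchain (c : ι) : IsChain (· ≤ ·) (Set.Iic c) := fun a ha b hb _ =>
    htree.isAcyclic.isAncestor_total ha hb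
  have hconvex (v : V) : Set.OrdConnected {i | v ∈ lam i} := ⟨fun a ha b hb s hs => by
    obtain ⟨p, hp, hsp⟩ := htree.isAcyclic.exists_isPath_of_isAncestor hs.1 hs.2
    exact hconn a b p hp v ha hb s hsp⟩
  have hbags (v : V) : IsChain (· ≤ ·) {i | v ∈ lam i} := fun i hi j hj _ => by
    by_contra h
    rw [not_or] at h
    have := hdisj i j h.1 h.2
    exact Finset.notMem_empty v (this ▸ Finset.mem_inter.2 ⟨hi, hj⟩)
  have hgreatest (v : V) : ∃ p, ∀ i, v ∈ lam i → IsGreatest {j | v ∈ lam j} p := by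
    by_cases h : ∃ i, v ∈ lam i
    · obtain ⟨p, hp⟩ := (hbags v).exists_isGreatest (Set.toFinite _) h
      exact ⟨p, fun _ _ => hp⟩
    · exact ⟨r, fun i hi => (h ⟨i, hi⟩).elim⟩
  choose posv hposv using hgreatest
  choose pose hpose using fun e : {e // e ∈ E} => hsurj e e.2
  exact mimw_le_of_forall_isCutAt hchain (htree.connected.isAncestor_root r)
    (Sum.elim posv pose) _ fun t X hX => cutMim_incG_le_two hchain hconvex hposv hpose hX

/-- if the hypergraph `E` has a disjoint branches decomposition
— a rooted join tree `(T, r, lam)` (with the running-intersection property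
along paths) in which edges at vertices lying on different branches are
disjoint — then its incidence graph has MIM-width at most `2`. -/
theorem stmt18 (E : Finset (Finset V))
    {ι : Type*} [Fintype ι] (T : SimpleGraph ι) (r : ι) (lam : ι → Finset V)
    (htree : T.IsTree)
    (hedges : ∀ i, lam i ∈ E)
    (hsurj : ∀ e ∈ E, ∃ i, lam i = e)
    (hconn : ∀ (i j : ι) (p : T.Walk i j), p.IsPath →
      ∀ v, v ∈ lam i → v ∈ lam j → ∀ t ∈ p.support, v ∈ lam t)
    (hdisj : ∀ i j : ι,
      (¬ ∃ p : T.Walk r j, p.IsPath ∧ i ∈ p.support) →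
      (¬ ∃ p : T.Walk r i, p.IsPath ∧ j ∈ p.support) →
      lam i ∩ lam j = ∅) :
    mimw (incG E) ≤ 2 :=
  stmt18_general E T r lam htree hsurj hconn hdisj
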